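/- Let Ms, a > 0, M(H) = Ms·(coth(H/a) - a/H) for H > 0. The susceptibility χ(H) = M(H)/H is strictly decreasing on (0, ∞). -/

import Mathlib

/-!
Write `L(x) = coth x - 1/x` for the Langevin function, so that the susceptibility is
`χ(H) = (Ms / a) · L(H/a) / (H/a)` and it suffices that `L(x)/x` is strictly decreasing.
Since `L'(x) = 1/x² - 1/sinh² x`, the sign of `(L(x)/x)' = (x L'(x) - L(x)) / x²` is that of
`2 sinh² x - x² - x sinh x cosh x`. In the variable `t = 2x` its negativity reads
`4 (cosh t - 1) < t² + t sinh t`. Both sides agree at `t = 0`, and differentiating twice reduces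
this to `2 (cosh t - 1) < t sinh t`; at the half angle `s = t/2` that is `sinh s < s cosh s` scaled
by `4 sinh s`, and one more differentiation proves it.
-/

open Real Set

noncomputable def langevin (x : ℝ) : ℝ := cosh x / sinh x - 1 / x

lemma pos_of_hasDerivAt_pos {f f' : ℝ → ℝ} (hf : ∀ x, HasDerivAt f (f' x) x) (h₀ : f 0 = 0)
    (hf' : ∀ x, 0 < x → 0 < f' x) {x : ℝ} (hx : 0 < x) : 0 < f x := by
  obtain ⟨c, hc, hslope⟩ := exists_hasDerivAt_eq_slope f f' hx
    (fun y _ => (hf y).continuousAt.continuousWithinAt) (fun y _ => hf y)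
  rw [h₀, sub_zero, sub_zero, eq_div_iff hx.ne'] at hslope
  rw [← hslope]
  exact mul_pos (hf' c hc.1) hx

lemma sinh_lt_mul_cosh {t : ℝ} (ht : 0 < t) : sinh t < t * cosh t := by
  have hderiv (s : ℝ) : HasDerivAt (fun s => s * cosh s - sinh s) (s * sinh s) s := ((hasDerivAt_id' s).mul (hasDerivAt_cosh s)).sub (hasDerivAt_sinh s) |>.congr_deriv
      (by ring)
  have := pos_of_hasDerivAt_pos hderiv (by simp)
    (fun s hs => mul_pos hs (sinh_pos_iff.mpr hs)) ht
  linarith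

lemma two_mul_cosh_sub_one_lt {t : ℝ} (ht : 0 < t) : 2 * (cosh t - 1) < t * sinh t := by
  obtain ⟨s, rfl⟩ : ∃ s, t = 2 * s := ⟨t / 2, by ring⟩
  have hs : 0 < s := by linarith
  have key := mul_lt_mul_of_pos_left (sinh_lt_mul_cosh hs) (by positivity : 0 < 4 * sinh s)
  rw [cosh_two_mul, sinh_two_mul]
  nlinarith [cosh_sq s]

lemma three_mul_sinh_lt {t : ℝ} (ht : 0 < t) : 3 * sinh t < t * (2 + cosh t) := by
  have hderiv (s : ℝ) : HasDerivAt (fun s => s * (2 + cosh s) - 3 * sinh s)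
      (s * sinh s - 2 * (cosh s - 1)) s := ((hasDerivAt_id' s).mul ((hasDerivAt_cosh s).const_add 2)).sub
      ((hasDerivAt_sinh s).const_mul 3) |>.congr_deriv (by ring)
  have := pos_of_hasDerivAt_pos hderiv (by simp)
    (fun s hs => sub_pos.mpr (two_mul_cosh_sub_one_lt hs)) ht
  linarith

lemma four_mul_cosh_sub_one_lt {t : ℝ} (ht : 0 < t) : 4 * (cosh t - 1) < t * (t + sinh t) := by
  have hderiv (s : ℝ) : HasDerivAt (fun s => s * (s + sinh s) - 4 * (cosh s - 1))
      (s * (2 + cosh s) - 3 * sinh s) s := ((hasDerivAt_id' s).mul ((hasDerivAt_id' s).fun_add (hasDerivAt_sinh s))).sub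
      (((hasDerivAt_cosh s).sub_const 1).const_mul 4) |>.congr_deriv (by ring)
  have := pos_of_hasDerivAt_pos hderiv (by simp)
    (fun s hs => sub_pos.mpr (three_mul_sinh_lt hs)) ht
  linarith

lemma two_mul_sinh_sq_lt {x : ℝ} (hx : 0 < x) :
    2 * sinh x ^ 2 < x ^ 2 + x * sinh x * cosh x := by
  have key := four_mul_cosh_sub_one_lt (by positivity : 0 < 2 * x)
  rw [cosh_two_mul, sinh_two_mul] at key
  nlinarith [cosh_sq x]

lemma hasDerivAt_langevin {x : ℝ} (hx : x ≠ 0) :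
    HasDerivAt langevin (1 / x ^ 2 - 1 / sinh x ^ 2) x := by
  have hs : sinh x ≠ 0 := sinh_ne_zero.mpr hx
  have hL : langevin = fun y => cosh y / sinh y - y⁻¹ := funext fun y => by simp [langevin]
  rw [hL]
  exact ((hasDerivAt_cosh x).div (hasDerivAt_sinh x) hs).sub (hasDerivAt_inv hx) |>.congr_deriv
    (by field_simp; linear_combination (-x ^ 2) * cosh_sq x)

lemma langevin_div_self_strictAntiOn : StrictAntiOn (fun x => langevin x / x) (Ioi 0) := by
  have hderiv : ∀ x ∈ Ioi (0 : ℝ), HasDerivAt (fun x => langevin x / x)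
      ((x * (1 / x ^ 2 - 1 / sinh x ^ 2) - langevin x) / x ^ 2) x := fun x hx =>
    (hasDerivAt_langevin (ne_of_gt hx)).div (hasDerivAt_id' x) (ne_of_gt hx) |>.congr_deriv
      (by ring)
  refine strictAntiOn_of_deriv_neg (convex_Ioi 0)
    (fun x hx => (hderiv x hx).continuousAt.continuousWithinAt) fun x hx => ?_
  rw [interior_Ioi] at hx
  rw [(hderiv x hx).deriv]
  replace hx : 0 < x := hx
  have hs : 0 < sinh x := sinh_pos_iff.mpr hx
  have hnum : x * (1 / x ^ 2 - 1 / sinh x ^ 2) - langevin x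
      = (2 * sinh x ^ 2 - (x ^ 2 + x * sinh x * cosh x)) / (x * sinh x ^ 2) := by
    unfold langevin
    field_simp
    ring
  rw [hnum]
  exact div_neg_of_neg_of_pos
    (div_neg_of_neg_of_pos (sub_neg.mpr (two_mul_sinh_sq_lt hx)) (by positivity)) (by positivity)

theorem susceptibility_strictAnti (Ms a : ℝ) (hMs : 0 < Ms) (ha : 0 < a) :
    StrictAntiOn
      (fun H : ℝ => Ms * (Real.cosh (H / a) / Real.sinh (H / a) - a / H) / H)
      (Set.Ioi 0) := by
  have hχ : (fun H : ℝ => Ms * (cosh (H / a) / sinh (H / a) - a / H) / H)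
      = fun H => Ms / a * (langevin (H / a) / (H / a)) := by
    ext H
    unfold langevin
    field_simp
  rw [hχ]
  intro H (hH : 0 < H) K (hK : 0 < K) hHK
  exact mul_lt_mul_of_pos_left (langevin_div_self_strictAntiOn (div_pos hH ha) (div_pos hK ha)
    (div_lt_div_of_pos_right hHK ha)) (div_pos hMs ha)
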